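/- arXiv:1403.6922 — 4 statements merged into one kernel-verified Lean document; each statement's English description precedes it below -/
import Mathlib

section
/- Let f : [0,a] → ℝ be a continuous convex function with f(0) < 0, and let α > 0, p > 0. Then ∫₀ᵃ x^(α-1) |f(x)|^p dx ≥ C(α,p) · |f(0)|^p · a^α, where C(α,p) := inf_{0 ≤ β ≤ 1} ∫₀¹ u^(α-1) |u - β|^p du. -/
open MeasureTheory Set

/-! By convexity, the graph of `f` lies below the chord from `(0, f 0)` to `(x₀, 0)`, where `x₀` is
the zero of `f` (or below the chord to `(a, f a)` if `f` has none), and above the extension of that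
chord beyond `x₀`. Hence `|f x| ≥ |f 0| |x / a - β|` with `β = x₀ / a`, and the substitution
`x = a u` turns the weighted integral of this lower bound into
`|f 0| ^ p a ^ α ∫₀¹ u ^ (α - 1) |u - β| ^ p`, which is at least `C(α, p) |f 0| ^ p a ^ α`. -/

theorem ConvexOn.sub_mul_le_of_le_of_le {𝕜 : Type*} [Field 𝕜] [LinearOrder 𝕜]
    [IsStrictOrderedRing 𝕜] {s : Set 𝕜} {f : 𝕜 → 𝕜} (hf : ConvexOn 𝕜 s f) {x y z : 𝕜}
    (hx : x ∈ s) (hz : z ∈ s) (hxy : x ≤ y) (hyz : y ≤ z) :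
    (z - x) * f y ≤ (z - y) * f x + (y - x) * f z := by
  rcases hxy.eq_or_lt with rfl | hxy
  · simp
  rcases hyz.eq_or_lt with rfl | hyz
  · simp
  exact hf.secant_mono_aux1 hx hz hxy hyz

theorem ConvexOn.exists_abs_mul_abs_sub_le {a : ℝ} (ha : 0 < a) {f : ℝ → ℝ}
    (hcont : ContinuousOn f (Icc 0 a)) (hconv : ConvexOn ℝ (Icc 0 a) f) (hf0 : f 0 < 0) :
    ∃ x₀ ∈ Ioc 0 a, ∀ x ∈ Icc 0 a, |f 0| * |x - x₀| ≤ x₀ * |f x| := by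
  have h0 : (0 : ℝ) ∈ Icc 0 a := left_mem_Icc.2 ha.le
  have below_chord : ∀ x₀ ∈ Ioc 0 a, f x₀ ≤ 0 → ∀ x ∈ Icc 0 x₀,
      |f 0| * |x - x₀| ≤ x₀ * |f x| := by
    intro x₀ hx₀ hfx₀ x hx
    have h := hconv.sub_mul_le_of_le_of_le h0 (Ioc_subset_Icc_self hx₀) hx.1 hx.2
    have hchord : x₀ * f x ≤ (x₀ - x) * f 0 := by
      nlinarith [mul_nonpos_of_nonneg_of_nonpos hx.1 hfx₀]
    have hfx : f x ≤ 0 := nonpos_of_mul_nonpos_right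
      (hchord.trans (mul_nonpos_of_nonneg_of_nonpos (sub_nonneg.2 hx.2) hf0.le)) hx₀.1
    rw [abs_of_neg hf0, abs_of_nonpos (sub_nonpos.2 hx.2), abs_of_nonpos hfx]
    linarith
  by_cases hfa : f a ≤ 0
  · exact ⟨a, right_mem_Ioc.2 ha, below_chord a (right_mem_Ioc.2 ha) hfa⟩
  obtain ⟨x₀, hx₀, hfx₀⟩ := intermediate_value_Icc ha.le hcont ⟨hf0.le, (not_le.1 hfa).le⟩
  have hx₀pos : 0 < x₀ := hx₀.1.lt_of_ne (by rintro rfl; linarith)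
  refine ⟨x₀, ⟨hx₀pos, hx₀.2⟩, fun x hx => ?_⟩
  rcases le_total x x₀ with hle | hge
  · exact below_chord x₀ ⟨hx₀pos, hx₀.2⟩ hfx₀.le x ⟨hx.1, hle⟩
  · have h := hconv.sub_mul_le_of_le_of_le h0 hx hx₀.1 hge
    have hchord : (x - x₀) * -f 0 ≤ x₀ * f x := by
      rw [hfx₀, mul_zero] at h
      linarith
    have hfx : 0 ≤ f x := nonneg_of_mul_nonneg_right
      ((mul_nonneg (sub_nonneg.2 hge) (neg_nonneg.2 hf0.le)).trans hchord) hx₀pos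
    rw [abs_of_neg hf0, abs_of_nonneg (sub_nonneg.2 hge), abs_of_nonneg hfx]
    linarith

theorem integral_Icc_rpow_mul_comp_div {a : ℝ} (ha : 0 < a) (r : ℝ) (g : ℝ → ℝ) :
    ∫ x in Icc 0 a, x ^ r * g (x / a) = a ^ (r + 1) * ∫ u in Icc 0 1, u ^ r * g u := by
  have hrescale : ∀ x ∈ uIcc 0 a, x ^ r * g (x / a) = a ^ r * ((x / a) ^ r * g (x / a)) := by
    intro x hx
    rw [uIcc_of_le ha.le] at hx
    rw [Real.div_rpow hx.1 ha.le, ← mul_assoc, mul_div_cancel₀ _ (Real.rpow_pos_of_pos ha r).ne']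
  rw [integral_Icc_eq_integral_Ioc, ← intervalIntegral.integral_of_le ha.le,
    intervalIntegral.integral_congr hrescale, intervalIntegral.integral_const_mul,
    intervalIntegral.integral_comp_div (fun u => u ^ r * g u) ha.ne', zero_div, div_self ha.ne',
    intervalIntegral.integral_of_le zero_le_one, ← integral_Icc_eq_integral_Ioc, smul_eq_mul,
    ← mul_assoc, Real.rpow_add_one ha.ne']

theorem integrableOn_Icc_rpow_mul {a r : ℝ} (hr : -1 < r) {g : ℝ → ℝ}
    (hg : ContinuousOn g (Icc 0 a)) : IntegrableOn (fun x => x ^ r * g x) (Icc 0 a) := by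
  have hrpow : IntegrableOn (fun x : ℝ => x ^ r) (Icc 0 a) := by
    rw [integrableOn_Icc_iff_integrableOn_Ioc]
    exact (intervalIntegral.intervalIntegrable_rpow' hr).1
  exact hrpow.mul_continuousOn hg isCompact_Icc

theorem ConvexOn.exists_abs_mul_abs_div_sub_le {a : ℝ} (ha : 0 < a) {f : ℝ → ℝ}
    (hcont : ContinuousOn f (Icc 0 a)) (hconv : ConvexOn ℝ (Icc 0 a) f) (hf0 : f 0 < 0) :
    ∃ β ∈ Icc (0 : ℝ) 1, ∀ x ∈ Icc 0 a, |f 0| * |x / a - β| ≤ |f x| := by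
  obtain ⟨x₀, hx₀, hbound⟩ := hconv.exists_abs_mul_abs_sub_le ha hcont hf0
  refine ⟨x₀ / a, ⟨div_nonneg hx₀.1.le ha.le, div_le_one_of_le₀ hx₀.2 ha.le⟩, fun x hx => ?_⟩
  rw [← sub_div, abs_div, abs_of_pos ha, ← mul_div_assoc, div_le_iff₀ ha]
  calc |f 0| * |x - x₀| ≤ x₀ * |f x| := hbound x hx
    _ ≤ a * |f x| := by gcongr; exact hx₀.2
    _ = |f x| * a := mul_comm _ _

/-- Lemma: for a continuous convex function `f` on `[0,a]` with `f 0 < 0`,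
`∫₀ᵃ x^(α-1) |f x|^p dx ≥ C(α,p) |f 0|^p a^α`, where
`C(α,p) = inf_{0 ≤ β ≤ 1} ∫₀¹ u^(α-1) |u-β|^p du`. -/
theorem stmt0 (a α p : ℝ) (ha : 0 < a) (hα : 0 < α) (hp : 0 < p)
    (f : ℝ → ℝ) (hcont : ContinuousOn f (Icc 0 a))
    (hconv : ConvexOn ℝ (Icc 0 a) f) (hf0 : f 0 < 0) :
    sInf ((fun β : ℝ => ∫ u in Icc (0:ℝ) 1, u ^ (α - 1) * |u - β| ^ p) '' Icc (0:ℝ) 1)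
        * |f 0| ^ p * a ^ α
      ≤ ∫ x in Icc (0:ℝ) a, x ^ (α - 1) * |f x| ^ p := by
  obtain ⟨β, hβ, hpt⟩ := hconv.exists_abs_mul_abs_div_sub_le ha hcont hf0
  have hbdd : BddBelow
      ((fun β : ℝ => ∫ u in Icc (0:ℝ) 1, u ^ (α - 1) * |u - β| ^ p) '' Icc (0:ℝ) 1) := by
    refine ⟨0, forall_mem_image.2 fun γ _ => setIntegral_nonneg measurableSet_Icc fun u hu => ?_⟩
    exact mul_nonneg (Real.rpow_nonneg hu.1 _) (by positivity)
  calc _ ≤ (∫ u in Icc (0:ℝ) 1, u ^ (α - 1) * |u - β| ^ p) * |f 0| ^ p * a ^ α := by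
        gcongr
        exact csInf_le hbdd (mem_image_of_mem _ hβ)
    _ = ∫ x in Icc (0:ℝ) a, x ^ (α - 1) * (|f 0| * |x / a - β|) ^ p := by
        rw [integral_Icc_rpow_mul_comp_div ha _ fun u => (|f 0| * |u - β|) ^ p, sub_add_cancel]
        simp_rw [Real.mul_rpow (abs_nonneg (f 0)) (abs_nonneg _), mul_left_comm _ (|f 0| ^ p),
          integral_const_mul]
        ring
    _ ≤ ∫ x in Icc (0:ℝ) a, x ^ (α - 1) * |f x| ^ p := by
        refine setIntegral_mono_of_nonneg (fun x hx => ?_) (fun x hx => ?_)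
          (integrableOn_Icc_rpow_mul (by linarith) (hcont.abs.rpow_const fun _ _ => Or.inr hp.le))
        · exact mul_nonneg (Real.rpow_nonneg hx.1 _) (by positivity)
        · exact mul_le_mul_of_nonneg_left
            (Real.rpow_le_rpow (by positivity) (hpt x hx) hp.le) (Real.rpow_nonneg hx.1 _)
end

section
/- Let φ : [0,1] → ℝ be a convex function with ∫₀¹ |φ(x)|^p dx ≤ 1 for some p ≥ 1. Then there is a constant c depending only on p such that for every y ∈ (0,1), |φ(y)| ≤ c · max(y^(-1/p), (1-y)^(-1/p)). -/
/-! Put `m = min y (1 - y)`. Each of the intervals `[y - m, y - 3m/4]`,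
`[y - m/2, y - m/4]` and `[y, y + m/4]` lies in `[0, 1]` and has length `m/4`, so, as
`∫₀¹ |φ|^p ≤ 1`, it contains a point where `|φ|^p ≤ 4/m`. The points of the last two intervals
bracket `y`, so convexity bounds `φ y` from above by `(m/4)^(-1/p)`; the points of the first two
lie to the left of `y` at distance comparable to `m` from each other, so the slope inequality
bounds `φ y` from below by `-6 (m/4)^(-1/p)`. -/

open MeasureTheory Set

theorem exists_le_integral_div_measureReal {α : Type*} [MeasurableSpace α] {μ : Measure α}
    {s t : Set α} {f : α → ℝ} (hst : s ⊆ t) (hs₀ : μ s ≠ 0) (hs : μ s ≠ ⊤)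
    (hf : IntegrableOn f t μ) (hf₀ : 0 ≤ᵐ[μ.restrict t] f) :
    ∃ x ∈ s, f x ≤ (∫ x in t, f x ∂μ) / μ.real s := by
  obtain ⟨x, hx, hle⟩ := exists_le_setAverage hs₀ hs (hf.mono_set hst)
  refine ⟨x, hx, hle.trans ?_⟩
  rw [setAverage_eq, smul_eq_mul, inv_mul_eq_div]
  exact div_le_div_of_nonneg_right (setIntegral_mono_set hf hf₀ hst.eventuallyLE)
    measureReal_nonneg

theorem exists_abs_le_rpow_of_integral_abs_rpow_le_one {t : Set ℝ} {φ : ℝ → ℝ}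
    {p a b : ℝ} (hp : 0 < p) (hφ : IntegrableOn (fun x => |φ x| ^ p) t)
    (hφ₁ : ∫ x in t, |φ x| ^ p ≤ 1) (hab : a < b) (hsub : Icc a b ⊆ t) :
    ∃ x ∈ Icc a b, |φ x| ≤ (b - a) ^ (-(1 / p)) := by
  have hba : 0 < b - a := sub_pos.2 hab
  obtain ⟨x, hx, hle⟩ := exists_le_integral_div_measureReal hsub
    (by simp [hab]) measure_Icc_lt_top.ne hφ (ae_of_all _ fun x => by positivity)
  refine ⟨x, hx, ?_⟩
  rw [Real.rpow_neg hba.le, ← Real.inv_rpow hba.le, one_div,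
    Real.le_rpow_inv_iff_of_pos (abs_nonneg _) (by positivity) hp]
  calc |φ x| ^ p ≤ (∫ x in t, |φ x| ^ p) / (b - a) := by
        simpa [Real.volume_real_Icc_of_le hab.le] using hle
    _ ≤ 1 / (b - a) := by gcongr
    _ = (b - a)⁻¹ := one_div _

namespace ConvexOn

variable {f : ℝ → ℝ} {a b : ℝ}

theorem exists_abs_le (hf : ConvexOn ℝ (Icc a b) f) :
    ∃ C, ∀ x ∈ Icc a b, |f x| ≤ C := by
  have hle_max : ∀ x ∈ Icc a b, f x ≤ max (f a) (f b) := by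
    intro x hx
    have hab : a ≤ b := hx.1.trans hx.2
    exact hf.le_on_segment (left_mem_Icc.2 hab) (right_mem_Icc.2 hab)
      (by rwa [segment_eq_Icc hab])
  refine ⟨|max (f a) (f b)| + 2 * |f ((a + b) / 2)|, fun x hx => abs_le.2 ⟨?_, ?_⟩⟩
  · have hx' : a + b - x ∈ Icc a b := ⟨by linarith [hx.2], by linarith [hx.1]⟩
    have hmid := hf.2 hx hx' (by norm_num : (0:ℝ) ≤ 1 / 2) (by norm_num : (0:ℝ) ≤ 1 / 2)
      (by norm_num)
    have hcenter : (1 / 2 : ℝ) • x + (1 / 2 : ℝ) • (a + b - x) = (a + b) / 2 := by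
      simp only [smul_eq_mul]; ring
    rw [hcenter, smul_eq_mul, smul_eq_mul] at hmid
    linarith [hle_max _ hx', le_abs_self (max (f a) (f b)), neg_abs_le (f ((a + b) / 2))]
  · linarith [hle_max x hx, le_abs_self (max (f a) (f b)), abs_nonneg (f ((a + b) / 2))]

theorem integrableOn_abs_rpow {p : ℝ} (hf : ConvexOn ℝ (Icc a b) f) (hp : 0 ≤ p) :
    IntegrableOn (fun x => |f x| ^ p) (Icc a b) := by
  obtain ⟨C, hC⟩ := hf.exists_abs_le
  have hcont : ContinuousOn f (Ioo a b) :=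
    (hf.subset Ioo_subset_Icc_self (convex_Ioo a b)).continuousOn isOpen_Ioo
  rw [integrableOn_Icc_iff_integrableOn_Ioo]
  have hmeas : AEStronglyMeasurable (fun x => |f x| ^ p) (volume.restrict (Ioo a b)) :=
    (hcont.abs.rpow_const fun _ _ => Or.inr hp).aestronglyMeasurable measurableSet_Ioo
  refine .of_bound measure_Ioo_lt_top hmeas (C ^ p) ?_
  filter_upwards [ae_restrict_mem measurableSet_Ioo] with x hx
  rw [Real.norm_of_nonneg (by positivity)]
  exact Real.rpow_le_rpow (abs_nonneg _) (hC x (Ioo_subset_Icc_self hx)) hp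

theorem abs_le_mul_of_abs_le {s : Set ℝ} {c d k M : ℝ} (hf : ConvexOn ℝ s f)
    (ha : a ∈ s) (hb : b ∈ s) (hd : d ∈ s) (hab : a < b) (hbc : b < c) (hcd : c ≤ d)
    (hfa : |f a| ≤ M) (hfb : |f b| ≤ M) (hfd : |f d| ≤ M) (hk : 1 ≤ k)
    (hck : (c - a) + (c - b) ≤ k * (b - a)) : |f c| ≤ k * M := by
  have hM : 0 ≤ M := (abs_nonneg _).trans hfa
  have hcbd : c ∈ segment ℝ b d := by
    rw [segment_eq_Icc (hbc.le.trans hcd)]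
    exact ⟨hbc.le, hcd⟩
  have hupper : f c ≤ M :=
    (hf.le_on_segment hb hd hcbd).trans (max_le (abs_le.1 hfb).2 (abs_le.1 hfd).2)
  have hsecant := hf.secant_mono_aux1 ha (hf.1.segment_subset hb hd hcbd) hab hbc
  have hfb' := mul_le_mul_of_nonneg_left (abs_le.1 hfb).1 (by linarith : 0 ≤ c - a)
  have hfa' := mul_le_mul_of_nonneg_left (abs_le.1 hfa).2 (by linarith : 0 ≤ c - b)
  have hkM := mul_le_mul_of_nonneg_right hck hM
  have hlower : (b - a) * -(k * M) ≤ (b - a) * f c := by linarith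
  exact abs_le.2 ⟨le_of_mul_le_mul_left hlower (sub_pos.2 hab),
    hupper.trans (le_mul_of_one_le_left hM hk)⟩

end ConvexOn

/-- If `φ` is convex on `[0,1]` with `∫₀¹ |φ|^p ≤ 1` for some `p ≥ 1`, then there is a
constant `c` depending only on `p` with `|φ y| ≤ c * max (y^(-1/p)) ((1-y)^(-1/p))`
for every `y ∈ (0,1)`. -/
theorem stmt4 (p : ℝ) (hp : 1 ≤ p) :
    ∃ c : ℝ, 0 < c ∧ ∀ φ : ℝ → ℝ, ConvexOn ℝ (Icc 0 1) φ →
      (∫ x in Icc (0:ℝ) 1, |φ x| ^ p) ≤ 1 →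
      ∀ y ∈ Ioo (0:ℝ) 1, |φ y| ≤ c * max (y ^ (-(1/p))) ((1 - y) ^ (-(1/p))) := by
  have hp₀ : 0 < p := by linarith
  refine ⟨6 * 4 ^ (1 / p), by positivity, fun φ hφ hφ₁ y hy => ?_⟩
  set m := min y (1 - y)
  have hm : 0 < m := lt_min hy.1 (sub_pos.2 hy.2)
  have hmy : m ≤ y := min_le_left _ _
  have hmy' : m ≤ 1 - y := min_le_right _ _
  have hI := hφ.integrableOn_abs_rpow hp₀.le
  have hsmall : ∀ a, 0 ≤ a → a + m / 4 ≤ 1 →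
      ∃ x ∈ Icc a (a + m / 4), |φ x| ≤ (m / 4) ^ (-(1 / p)) := fun a ha ha' => by
      simpa using exists_abs_le_rpow_of_integral_abs_rpow_le_one hp₀ hI hφ₁
        (by linarith : a < a + m / 4) (Icc_subset_Icc ha ha')
  obtain ⟨x₁, ⟨hx₁l, hx₁r⟩, hφx₁⟩ := hsmall (y - m) (by linarith) (by linarith)
  obtain ⟨x₂, ⟨hx₂l, hx₂r⟩, hφx₂⟩ := hsmall (y - m / 2) (by linarith) (by linarith)
  obtain ⟨x₃, ⟨hx₃l, hx₃r⟩, hφx₃⟩ := hsmall y hy.1.le (by linarith)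
  have hφy := hφ.abs_le_mul_of_abs_le (c := y) (k := 6)
    ⟨by linarith, by linarith⟩ ⟨by linarith, by linarith⟩ ⟨by linarith, by linarith⟩
    (by linarith) (by linarith) hx₃l hφx₁ hφx₂ hφx₃ (by norm_num) (by linarith)
  have hmax : m ^ (-(1 / p)) ≤ max (y ^ (-(1 / p))) ((1 - y) ^ (-(1 / p))) := by
    rcases min_choice y (1 - y) with h | h <;> simp only [m, h, le_max_left, le_max_right]
  calc |φ y| ≤ 6 * (m / 4) ^ (-(1 / p)) := hφy
    _ = 6 * 4 ^ (1 / p) * m ^ (-(1 / p)) := by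
      rw [Real.div_rpow hm.le (by norm_num), Real.rpow_neg (by norm_num : (0:ℝ) ≤ 4)]
      field_simp
    _ ≤ 6 * 4 ^ (1 / p) * max (y ^ (-(1 / p))) ((1 - y) ^ (-(1 / p))) := by gcongr
end

section
/- Fix 1 ≤ p ≤ q < ∞ and d ≥ 1. For j ≥ 1 define f_j : [0,1]^d → ℝ by f_j(x) = (1+p)^(1/p) 2^(j/p) max(0, 1 - 2^j x₁). Then each f_j is convex on [0,1]^d with ∫_{[0,1]^d} |f_j|^p dx ≤ 1, and there is a constant c > 0 depending only on p and q such that for all j < k, ∫_{[0,1]^d} |f_j - f_k|^q dx ≥ c. -/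
/-!
Each `f_j` only depends on `x₁`, so every integral over the cube is an integral over
`[0,1]`. The ramp `max 0 (1 - a t)` is a maximum of affine functions, hence convex, and
`∫₀¹ (max 0 (1 - a t))^r dt = 1 / (a (r + 1))`; the factor `((1 + p) 2^j)^(1/p)` makes
the `L^p` integral exactly `1`. For `j < k` the `k`-th spike vanishes on
`[2^(-j-1), 2^(-j)]`, where the `j`-th one contributes
`((1 + p) 2^j)^(q/p) 2^(-j) 2^(-q-1) / (q + 1) ≥ 2^(-q-1) / (q + 1)` because `q / p ≥ 1`.
-/

open MeasureTheory Set

theorem integral_Icc_zero_one_comp_eval {ι : Type*} [Fintype ι] (i : ι) {g : ℝ → ℝ}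
    (hg : AEStronglyMeasurable g (volume.restrict (Icc 0 1))) :
    ∫ x in Icc (0 : ι → ℝ) 1, g (x i) = ∫ t in Icc 0 1, g t := by
  have : IsProbabilityMeasure (volume.restrict (Icc (0 : ℝ) 1)) := ⟨by simp⟩
  rw [← pi_univ_Icc, volume_pi, Measure.restrict_pi_pi]
  exact integral_comp_eval hg

def ramp (a t : ℝ) : ℝ := max 0 (1 - a * t)

theorem ramp_nonneg (a t : ℝ) : 0 ≤ ramp a t := le_max_left _ _

theorem ramp_of_le_inv {a t : ℝ} (ha : 0 < a) (ht : t ≤ a⁻¹) : ramp a t = 1 - a * t := by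
  refine max_eq_right ?_
  have := mul_le_mul_of_nonneg_left ht ha.le
  rw [mul_inv_cancel₀ ha.ne'] at this
  linarith

theorem ramp_of_inv_le {a t : ℝ} (ha : 0 < a) (ht : a⁻¹ ≤ t) : ramp a t = 0 := by
  refine max_eq_left ?_
  have := mul_le_mul_of_nonneg_left ht ha.le
  rw [mul_inv_cancel₀ ha.ne'] at this
  linarith

@[fun_prop]
theorem continuous_ramp (a : ℝ) : Continuous (ramp a) := by
  unfold ramp; fun_prop

theorem convexOn_ramp (a : ℝ) : ConvexOn ℝ univ (ramp a) :=
  (convexOn_const 0 convex_univ).sup <|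
    (((LinearMap.mul ℝ ℝ (-a)).convexOn convex_univ).add_const 1).congr fun t _ => by
      simp only [map_neg, LinearMap.coe_neg, Pi.add_apply, Pi.neg_apply,
        LinearMap.mul_apply_apply]
      ring

theorem convexOn_const_mul_ramp_eval {ι : Type*} {s : Set (ι → ℝ)} (hs : Convex ℝ s)
    (i : ι) {A : ℝ} (hA : 0 ≤ A) (a : ℝ) : ConvexOn ℝ s fun x => A * ramp a (x i) :=
  (((convexOn_ramp a).comp_linearMap (LinearMap.proj (R := ℝ) (φ := fun _ => ℝ) i)).subset
    (subset_univ _) hs).smul hA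

theorem integral_Icc_ramp_rpow {a r s : ℝ} (ha : 0 < a) (hr : -1 < r) (hs : 0 ≤ s) :
    ∫ t in Icc ((1 - s) / a) a⁻¹, ramp a t ^ r = s ^ (r + 1) / (a * (r + 1)) := by
  have hle : (1 - s) / a ≤ a⁻¹ := by
    rw [div_eq_mul_inv]; exact mul_le_of_le_one_left (inv_pos.2 ha).le (by linarith)
  rw [integral_Icc_eq_integral_Ioc, ← intervalIntegral.integral_of_le hle,
    intervalIntegral.integral_congr (g := fun t => (1 - a * t) ^ r) fun t ht => by
      rw [uIcc_of_le hle] at ht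
      simp only [ramp_of_le_inv ha ht.2],
    intervalIntegral.integral_comp_sub_mul (fun x => x ^ r) ha.ne', integral_rpow (Or.inl hr)]
  rw [mul_div_cancel₀ _ ha.ne', mul_inv_cancel₀ ha.ne', sub_sub_cancel, sub_self,
    Real.zero_rpow (by linarith), sub_zero, smul_eq_mul]
  field_simp

theorem integral_Icc_zero_one_ramp_rpow {a r : ℝ} (ha : 1 ≤ a) (hr : 0 < r) :
    ∫ t in Icc 0 1, ramp a t ^ r = 1 / (a * (r + 1)) := by
  have ha₀ : 0 < a := by linarith
  have h := integral_Icc_ramp_rpow ha₀ (by linarith) zero_le_one (r := r)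
  rw [sub_self, zero_div, Real.one_rpow] at h
  rw [← h]
  refine setIntegral_eq_of_subset_of_forall_sdiff_eq_zero measurableSet_Icc
    (Icc_subset_Icc_right (inv_le_one_of_one_le₀ ha)) fun t ht => ?_
  have ht' : a⁻¹ ≤ t := le_of_lt (not_le.1 fun h' => ht.2 ⟨ht.1.1, h'⟩)
  rw [ramp_of_inv_le ha₀ ht', Real.zero_rpow hr.ne']

theorem le_integral_Icc_abs_sub_ramp_rpow {a b A B r : ℝ} (ha : 1 ≤ a) (hab : 2 * a ≤ b)
    (hA : 0 ≤ A) (hr : 0 < r) :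
    A ^ r * ((1 / 2) ^ (r + 1) / (a * (r + 1))) ≤
      ∫ t in Icc 0 1, |A * ramp a t - B * ramp b t| ^ r := by
  have ha₀ : 0 < a := by linarith
  have hsub : Icc ((1 - 1 / 2) / a) a⁻¹ ⊆ Icc 0 1 :=
    Icc_subset_Icc (by positivity) (inv_le_one_of_one_le₀ ha)
  have hb : ∀ t ∈ Icc ((1 - 1 / 2) / a) a⁻¹, ramp b t = 0 := fun t ht =>
    ramp_of_inv_le (by linarith) <| by
      calc b⁻¹ ≤ (2 * a)⁻¹ := inv_anti₀ (by positivity) hab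
        _ = (1 - 1 / 2) / a := by field_simp; norm_num
        _ ≤ t := ht.1
  have hcont : Continuous fun t => |A * ramp a t - B * ramp b t| ^ r := by
    fun_prop (disch := linarith)
  calc A ^ r * ((1 / 2) ^ (r + 1) / (a * (r + 1)))
      = ∫ t in Icc ((1 - 1 / 2) / a) a⁻¹, A ^ r * ramp a t ^ r := by
        rw [integral_const_mul, integral_Icc_ramp_rpow ha₀ (by linarith) (by norm_num)]
    _ = ∫ t in Icc ((1 - 1 / 2) / a) a⁻¹, |A * ramp a t - B * ramp b t| ^ r :=
        setIntegral_congr_fun measurableSet_Icc fun t ht => by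
          rw [hb t ht, mul_zero, sub_zero, abs_of_nonneg (mul_nonneg hA (ramp_nonneg a t)),
            Real.mul_rpow hA (ramp_nonneg a t)]
    _ ≤ _ := setIntegral_mono_set hcont.integrableOn_Icc
        (Filter.Eventually.of_forall fun t => by positivity) hsub.eventuallyLE

theorem integral_Icc_zero_one_abs_mul_ramp_rpow {a A r : ℝ} (ha : 1 ≤ a) (hA : 0 ≤ A)
    (hr : 0 < r) : ∫ t in Icc 0 1, |A * ramp a t| ^ r = A ^ r / (a * (r + 1)) := by
  simp_rw [abs_of_nonneg (mul_nonneg hA (ramp_nonneg a _)), Real.mul_rpow hA (ramp_nonneg a _)]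
  rw [integral_const_mul, integral_Icc_zero_one_ramp_rpow ha hr, mul_one_div]

theorem rpow_one_div_mul_rpow_div {x y : ℝ} (hx : 0 ≤ x) (hy : 0 ≤ y) (p b : ℝ) :
    x ^ (1 / p) * y ^ (b / p) = (x * y ^ b) ^ (1 / p) := by
  rw [Real.mul_rpow hx (Real.rpow_nonneg hy b), ← Real.rpow_mul hy, mul_one_div]

noncomputable def spike (p : ℝ) (j : ℕ) {ι : Type*} (i : ι) (x : ι → ℝ) : ℝ :=
  ((1 + p) * 2 ^ j) ^ (1 / p) * ramp (2 ^ j) (x i)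

section spike

variable {p : ℝ} {ι : Type*} (i : ι)

theorem spike_eq (hp : -1 ≤ p) (j : ℕ) : spike p j i =
    fun x => (1 + p) ^ (1 / p) * 2 ^ ((j : ℝ) / p) * max 0 (1 - 2 ^ (j : ℝ) * x i) := by
  have h1p : 0 ≤ 1 + p := by linarith
  rw [rpow_one_div_mul_rpow_div h1p zero_le_two, Real.rpow_natCast]
  rfl

theorem convexOn_spike (hp : -1 ≤ p) (j : ℕ) : ConvexOn ℝ (Icc 0 1) (spike p j i) := by
  have h1p : 0 ≤ 1 + p := by linarith
  exact convexOn_const_mul_ramp_eval (convex_Icc 0 1) i (by positivity) _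

theorem integral_abs_spike_rpow [Fintype ι] (hp : 0 < p) (j : ℕ) :
    ∫ x in Icc (0 : ι → ℝ) 1, |spike p j i x| ^ p = 1 := by
  have hA : 0 ≤ ((1 + p) * (2 : ℝ) ^ j) ^ (1 / p) := by positivity
  unfold spike
  rw [integral_Icc_zero_one_comp_eval (g := fun t => |_ * ramp _ t| ^ p) i
      (Continuous.aestronglyMeasurable (by fun_prop (disch := linarith))),
    integral_Icc_zero_one_abs_mul_ramp_rpow (one_le_pow₀ one_le_two) hA hp,
    ← Real.rpow_mul (by positivity), one_div_mul_cancel hp.ne', Real.rpow_one,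
    div_eq_one_iff_eq (by positivity)]
  ring

theorem le_integral_abs_sub_spike_rpow [Fintype ι] {q : ℝ} (hp : 0 < p) (hpq : p ≤ q)
    {j k : ℕ} (hjk : j < k) :
    (1 / 2) ^ (q + 1) / (q + 1) ≤
      ∫ x in Icc (0 : ι → ℝ) 1, |spike p j i x - spike p k i x| ^ q := by
  unfold spike
  rw [integral_Icc_zero_one_comp_eval (g := fun t => |_ * ramp _ t - _ * ramp _ t| ^ q) i
      (Continuous.aestronglyMeasurable (by fun_prop (disch := linarith)))]
  have hab : 2 * (2 : ℝ) ^ j ≤ 2 ^ k := by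
    rw [← pow_succ']; exact pow_le_pow_right₀ one_le_two hjk
  refine le_trans ?_ (le_integral_Icc_abs_sub_ramp_rpow (one_le_pow₀ one_le_two) hab
    (by positivity) (by linarith))
  have hX : (2 : ℝ) ^ j ≤ (((1 + p) * 2 ^ j) ^ (1 / p)) ^ q := by
    rw [← Real.rpow_mul (by positivity), one_div_mul_eq_div]
    exact (le_mul_of_one_le_left (by positivity) (by linarith)).trans <|
      Real.self_le_rpow_of_one_le (one_le_mul_of_one_le_of_one_le (by linarith)
        (one_le_pow₀ one_le_two)) ((one_le_div hp).2 hpq)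
  calc (1 / 2) ^ (q + 1) / (q + 1) = 2 ^ j * ((1 / 2) ^ (q + 1) / (2 ^ j * (q + 1))) := by
        field_simp
    _ ≤ _ := mul_le_mul_of_nonneg_right hX <|
        div_nonneg (by positivity) (mul_nonneg (by positivity) (by linarith))

end spike

/-- The spike functions `f_j(x) = (1+p)^(1/p) 2^(j/p) max(0, 1 - 2^j x₁)` on `[0,1]^d`
are convex, have `L^p` norm at most `1`, and for `1 ≤ p ≤ q < ∞` they are uniformly
separated in `L^q`: there is `c > 0` depending only on `p` and `q` with
`∫ |f_j - f_k|^q ≥ c` for all `1 ≤ j < k`. -/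
theorem stmt8 (p q : ℝ) (hp : 1 ≤ p) (hpq : p ≤ q) :
    (∀ (d : ℕ) (hd : 1 ≤ d) (f : ℕ → (Fin d → ℝ) → ℝ),
      (∀ j, f j = fun x => (1 + p) ^ (1/p) * 2 ^ ((j : ℝ)/p) *
        max 0 (1 - 2 ^ (j : ℝ) * x ⟨0, hd⟩)) →
      ∀ j, 1 ≤ j → ConvexOn ℝ (Icc (0 : Fin d → ℝ) 1) (f j) ∧
        (∫ x in Icc (0 : Fin d → ℝ) 1, |f j x| ^ p) ≤ 1) ∧
    ∃ c : ℝ, 0 < c ∧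
      ∀ (d : ℕ) (hd : 1 ≤ d) (f : ℕ → (Fin d → ℝ) → ℝ),
      (∀ j, f j = fun x => (1 + p) ^ (1/p) * 2 ^ ((j : ℝ)/p) *
        max 0 (1 - 2 ^ (j : ℝ) * x ⟨0, hd⟩)) →
      ∀ j k : ℕ, 1 ≤ j → j < k →
        c ≤ ∫ x in Icc (0 : Fin d → ℝ) 1, |f j x - f k x| ^ q := by
  have hp₀ : 0 < p := by linarith
  have hp₁ : -1 ≤ p := by linarith
  refine ⟨fun d hd f hf j _ => ?_, (1 / 2) ^ (q + 1) / (q + 1),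
    div_pos (by positivity) (by linarith), fun d hd f hf j k _ hjk => ?_⟩
  · rw [hf j, ← spike_eq _ hp₁]
    exact ⟨convexOn_spike _ hp₁ j, (integral_abs_spike_rpow _ hp₀ j).le⟩
  · rw [hf j, hf k, ← spike_eq _ hp₁, ← spike_eq _ hp₁]
    exact le_integral_abs_sub_spike_rpow _ hp₀ hpq hjk
end

section
/- Fix 1 ≤ q < p < ∞ and d ≥ 1, and set η_i := exp(((p+q)/(2p))^i · log η) for a fixed η ∈ (0, u), where u := exp(−2p(p+q)(2q+d) log 2 / (d(p−q)²)). Let l be the largest integer i with η_i < u, and define ζ_i := η_{i+1}^(d/(2q+d)) / η_i^(dq/(p(2q+d))). Then ζ_i / ζ_{i-1} ≥ 2 for all 1 ≤ i ≤ l, and consequently ∑_{i=0}^l ζ_i ≤ 2 ζ_l ≤ 2 exp(d(p−q)/(2p(2q+d)) · log u). -/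
/-!
Writing `r = (p+q)/(2p) ∈ (0,1)` and `L = log η < 0`, one has `log η_i = r^i L`, and a direct
computation gives `ζ_i = exp (c r^i L)` with `c = d(p-q)/(2p(2q+d))`. Hence
`log (ζ_i / ζ_{i-1}) = c (1-r) r^{i-1} (-L)`, which the choice of `u` makes at least `log 2`
as soon as `r^i L < log u`, i.e. for `i ≤ l`. Doubling terms sum to at most twice the last one.
-/

open Real Finset

theorem Finset.sum_range_succ_le_two_mul {α : Type*} [Field α] [LinearOrder α]
    [IsStrictOrderedRing α] {f : ℕ → α} {n : ℕ} (h0 : 0 ≤ f 0)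
    (hf : ∀ j < n, 2 * f j ≤ f (j + 1)) :
    ∑ i ∈ range (n + 1), f i ≤ 2 * f n := by
  induction n with
  | zero => simp only [zero_add, sum_range_one]; linarith
  | succ n ih =>
    rw [sum_range_succ]
    have hsum := ih fun j hj => hf j (by omega)
    have hlast := hf n (by omega)
    linarith

theorem Real.two_mul_exp_le_exp_of_log_two_le {x y : ℝ} (h : log 2 ≤ y - x) :
    2 * exp x ≤ exp y := by
  calc 2 * exp x = exp (log 2 + x) := by rw [exp_add, exp_log two_pos]
    _ ≤ exp y := exp_le_exp.mpr (by linarith)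

theorem Real.two_mul_exp_le_exp_of_pow_succ_mul_le {c r L a : ℝ} {j : ℕ} (hr0 : 0 < r)
    (hcr : 0 ≤ c * (1 - r)) (ha : c * (1 - r) * a = -(r * log 2)) (hj : r ^ (j + 1) * L ≤ a) :
    2 * exp (c * (r ^ j * L)) ≤ exp (c * (r ^ (j + 1) * L)) := by
  apply two_mul_exp_le_exp_of_log_two_le
  have hscaled :
      r * (c * (r ^ (j + 1) * L) - c * (r ^ j * L)) = c * (1 - r) * -(r ^ (j + 1) * L) := by
    ring
  have hbound : r * log 2 ≤ c * (1 - r) * -(r ^ (j + 1) * L) := by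
    nlinarith [mul_le_mul_of_nonneg_left (neg_le_neg hj) hcr]
  exact le_of_mul_le_mul_left (hscaled ▸ hbound) hr0

theorem Real.two_mul_exp_le_exp_of_pow_mul_lt {c r L a : ℝ} {l : ℕ} (hr0 : 0 < r)
    (hr1 : r ≤ 1) (hcr : 0 ≤ c * (1 - r)) (ha : c * (1 - r) * a = -(r * log 2))
    (hl : r ^ l * L < a) :
    ∀ j < l, 2 * exp (c * (r ^ j * L)) ≤ exp (c * (r ^ (j + 1) * L)) := by
  intro j hj
  have ha0 : a < 0 :=
    neg_of_mul_neg_right (ha ▸ neg_neg_of_pos (mul_pos hr0 (log_pos one_lt_two))) hcr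
  have hL : L ≤ 0 := by
    by_contra! hL
    nlinarith [pow_pos hr0 l]
  refine two_mul_exp_le_exp_of_pow_succ_mul_le hr0 hcr ha (le_trans ?_ hl.le)
  exact mul_le_mul_of_nonpos_right (pow_le_pow_of_le_one hr0.le hr1 hj) hL

theorem exp_pow_succ_rpow_div_exp_pow_rpow (p q d L : ℝ) (i : ℕ) :
    exp (((p + q) / (2 * p)) ^ (i + 1) * L) ^ (d / (2 * q + d)) /
        exp (((p + q) / (2 * p)) ^ i * L) ^ (d * q / (p * (2 * q + d))) =
      exp (d * (p - q) / (2 * p * (2 * q + d)) * (((p + q) / (2 * p)) ^ i * L)) := by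
  rw [← exp_mul, ← exp_mul, ← exp_sub, pow_succ]
  congr 1
  generalize ((p + q) / (2 * p)) ^ i = s
  field_simp
  ring

theorem stmt13_general (d : ℕ) (hd : 1 ≤ d) (p q : ℝ) (hq : 1 ≤ q) (hqp : q < p)
    (u η : ℝ)
    (hu : u = Real.exp (-(2 * p * (p + q) * (2 * q + d) * Real.log 2) / (d * (p - q) ^ 2)))
    (ηs : ℕ → ℝ) (hηs : ∀ i, ηs i = Real.exp (((p + q) / (2 * p)) ^ i * Real.log η))
    (l : ℕ) (hl : ηs l < u)
    (ζ : ℕ → ℝ)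
    (hζ : ∀ i, ζ i = ηs (i + 1) ^ ((d : ℝ) / (2 * q + d)) /
      ηs i ^ ((d : ℝ) * q / (p * (2 * q + d)))) :
    (∀ i, 1 ≤ i → i ≤ l → 2 ≤ ζ i / ζ (i - 1)) ∧
    (∑ i ∈ Finset.range (l + 1), ζ i) ≤ 2 * ζ l ∧
    2 * ζ l ≤ 2 * Real.exp ((d : ℝ) * (p - q) / (2 * p * (2 * q + d)) * Real.log u) := by
  have hp : 0 < p := by linarith
  have hd0 : (0 : ℝ) < d := by exact_mod_cast hd
  set r := (p + q) / (2 * p) with hr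
  set c := (d : ℝ) * (p - q) / (2 * p * (2 * q + d)) with hc
  have hr0 : 0 < r := by positivity
  have hr1 : r ≤ 1 := by rw [div_le_one (by positivity)]; linarith
  have hcr : 0 ≤ c * (1 - r) :=
    mul_nonneg (div_nonneg (by nlinarith) (by positivity)) (by linarith)
  have hζexp : ∀ i, ζ i = exp (c * (r ^ i * log η)) := fun i => by
    rw [hζ, hηs, hηs, exp_pow_succ_rpow_div_exp_pow_rpow]
  have hlogu : c * (1 - r) * log u = -(r * log 2) := by
    have hpq : p - q ≠ 0 := by linarith
    rw [hu, log_exp, hr, hc]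
    field_simp
    ring
  have hlt : r ^ l * log η < log u := by
    rwa [hηs, ← lt_log_iff_exp_lt (hu ▸ exp_pos _)] at hl
  have hdouble : ∀ j < l, 2 * ζ j ≤ ζ (j + 1) := by
    simpa only [← hζexp] using two_mul_exp_le_exp_of_pow_mul_lt hr0 hr1 hcr hlogu hlt
  refine ⟨fun i hi hil => ?_,
    sum_range_succ_le_two_mul (hζexp 0 ▸ (exp_pos _).le) hdouble, ?_⟩
  · obtain ⟨j, rfl⟩ := Nat.exists_eq_add_of_le' hi
    rw [Nat.add_sub_cancel, le_div_iff₀ (hζexp j ▸ exp_pos _)]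
    exact hdouble j hil
  · rw [hζexp]
    gcongr

/-- The key geometric-sum estimate in the proof of Proposition `kred`: with
`u = exp(−2p(p+q)(2q+d) log 2/(d(p−q)²))`, `η_i = η^{((p+q)/(2p))^i}` and
`ζ_i = η_{i+1}^{d/(2q+d)} / η_i^{dq/(p(2q+d))}`, one has `ζ_i/ζ_{i-1} ≥ 2` for
`1 ≤ i ≤ l` and `∑_{i=0}^l ζ_i ≤ 2 ζ_l ≤ 2 exp(d(p−q) log u/(2p(2q+d)))`. -/
theorem stmt13 (d : ℕ) (hd : 1 ≤ d) (p q : ℝ) (hq : 1 ≤ q) (hqp : q < p)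
    (u η : ℝ)
    (hu : u = Real.exp (-(2 * p * (p + q) * (2 * q + d) * Real.log 2) / (d * (p - q) ^ 2)))
    (hη : 0 < η) (hηu : η < u)
    (ηs : ℕ → ℝ) (hηs : ∀ i, ηs i = Real.exp (((p + q) / (2 * p)) ^ i * Real.log η))
    (l : ℕ) (hl : ηs l < u) (hl' : u ≤ ηs (l + 1))
    (ζ : ℕ → ℝ)
    (hζ : ∀ i, ζ i = ηs (i + 1) ^ ((d : ℝ) / (2 * q + d)) /
      ηs i ^ ((d : ℝ) * q / (p * (2 * q + d)))) :
    (∀ i, 1 ≤ i → i ≤ l → 2 ≤ ζ i / ζ (i - 1)) ∧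
    (∑ i ∈ Finset.range (l + 1), ζ i) ≤ 2 * ζ l ∧
    2 * ζ l ≤ 2 * Real.exp ((d : ℝ) * (p - q) / (2 * p * (2 * q + d)) * Real.log u) :=
  stmt13_general d hd p q hq hqp u η hu ηs hηs l hl ζ hζ
end
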